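/- arXiv:2407.16300 — 2 statements merged into one kernel-verified Lean document; each statement's English description precedes it below -/
import Mathlib

section
/- (Litmus test 9: using MStore for the first write prevents the inconsistent recovered state) Assume machines 1 and 2 are distinct, x ∈ Loc_2, y ∈ Loc_1, machine 2's memory is non-volatile, and 1 is a value in Val with 1 ≠ 0. Then there is no configuration γ' such that γ_0 ⇒^{MStore_1(x,1)·RStore_2(y,1)·Crash_2·Load_1(y,1)·Load_1(x,0)} γ', i.e., no execution from the initial configuration performs MStore_1(x,1), then RStore_2(y,1), then Crash_2, then Load_1(y,1), then Load_1(x,0), possibly interleaved with silent τ-steps. -/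
/-!  The CXL0 model.

We fix an abstract type `Machine` of machines, a type `Loc` of shared
locations, and a type `Val` of values with a distinguished value `z`
(playing the role of the value `0`).  The partition of `Loc` into the
pairwise disjoint sets `Loc_1, …, Loc_N` is encoded by an ownership map
`owner : Loc → Machine` (so `x ∈ Loc_k` iff `owner x = k`).  Volatility of
each machine's memory is given by `vol : Machine → Bool` (`vol i = true`
means machine `i`'s memory is volatile).

A configuration `γ = (Cache, Mem)` is modeled by total maps
`cache : Machine → Loc → Option Val` (with `none` playing the role of `⊥`)
and `mem : Machine → Loc → Val` (the entries of `mem i` at locations not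
owned by `i` are irrelevant; the transitions never consult them). -/

/-- Transition labels of the CXL0 labeled transition system. -/
inductive CXLLabel (Machine Loc Val : Type) : Type where
  | LStore (i : Machine) (x : Loc) (v : Val)
  | RStore (i : Machine) (x : Loc) (v : Val)
  | MStore (i : Machine) (x : Loc) (v : Val)
  | Load   (i : Machine) (x : Loc) (v : Val)
  | LFlush (i : Machine) (x : Loc)
  | RFlush (i : Machine) (x : Loc)
  | GPF    (i : Machine)
  | Crash  (i : Machine)
  | tau

/-- Configurations of the CXL0 model. -/
structure CXLConfig (Machine Loc Val : Type) : Type where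
  cache : Machine → Loc → Option Val
  mem   : Machine → Loc → Val

variable {Machine Loc Val : Type} [DecidableEq Machine] [DecidableEq Loc]

/-- Single labeled transition of the CXL0 model. -/
inductive CXLStep (owner : Loc → Machine) (vol : Machine → Bool) (z : Val) :
    CXLConfig Machine Loc Val → CXLLabel Machine Loc Val →
      CXLConfig Machine Loc Val → Prop where
  | lstore (γ : CXLConfig Machine Loc Val) (i : Machine) (x : Loc) (v : Val) :
      CXLStep owner vol z γ (.LStore i x v)
        ⟨fun j y => if y = x then (if j = i then some v else none) else γ.cache j y,
         γ.mem⟩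
  | rstore (γ : CXLConfig Machine Loc Val) (i : Machine) (x : Loc) (v : Val) :
      CXLStep owner vol z γ (.RStore i x v)
        ⟨fun j y => if y = x then (if j = owner x then some v else none) else γ.cache j y,
         γ.mem⟩
  | mstore (γ : CXLConfig Machine Loc Val) (i : Machine) (x : Loc) (v : Val) :
      CXLStep owner vol z γ (.MStore i x v)
        ⟨fun j y => if y = x then none else γ.cache j y,
         fun j y => if j = owner x ∧ y = x then v else γ.mem j y⟩
  | load_cache (γ : CXLConfig Machine Loc Val) (i j : Machine) (x : Loc) (v : Val)
      (h : γ.cache j x = some v) :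
      CXLStep owner vol z γ (.Load i x v)
        ⟨fun j' y => if j' = i ∧ y = x then some v else γ.cache j' y, γ.mem⟩
  | load_mem (γ : CXLConfig Machine Loc Val) (i : Machine) (x : Loc) (v : Val)
      (h : ∀ j, γ.cache j x = none) (hm : γ.mem (owner x) x = v) :
      CXLStep owner vol z γ (.Load i x v) γ
  | lflush (γ : CXLConfig Machine Loc Val) (i : Machine) (x : Loc)
      (h : γ.cache i x = none) :
      CXLStep owner vol z γ (.LFlush i x) γ
  | rflush (γ : CXLConfig Machine Loc Val) (i : Machine) (x : Loc)
      (h : ∀ j, γ.cache j x = none) :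
      CXLStep owner vol z γ (.RFlush i x) γ
  | gpf (γ : CXLConfig Machine Loc Val) (i : Machine)
      (h : ∀ j y, γ.cache j y = none) :
      CXLStep owner vol z γ (.GPF i) γ
  | prop_cache_cache (γ : CXLConfig Machine Loc Val) (i : Machine) (x : Loc) (v : Val)
      (hik : i ≠ owner x) (h : γ.cache i x = some v) :
      CXLStep owner vol z γ .tau
        ⟨fun j y => if y = x then
            (if j = owner x then some v else if j = i then none else γ.cache j y)
          else γ.cache j y,
         γ.mem⟩
  | prop_cache_mem (γ : CXLConfig Machine Loc Val) (x : Loc) (v : Val)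
      (h : γ.cache (owner x) x = some v) :
      CXLStep owner vol z γ .tau
        ⟨fun j y => if y = x then none else γ.cache j y,
         fun j y => if j = owner x ∧ y = x then v else γ.mem j y⟩
  | crash (γ : CXLConfig Machine Loc Val) (i : Machine) :
      CXLStep owner vol z γ (.Crash i)
        ⟨fun j y => if j = i then none else γ.cache j y,
         fun j y => if j = i ∧ vol i then z else γ.mem j y⟩

/-- `CXLTrace owner vol z γ ls γ'` : `γ'` is reachable from `γ` by a sequence of
transitions labeled by the elements of `ls`, in this order, possibly interleaved
with additional silent `τ`-steps (this is the `γ ⇒^{α_1⋯α_n} γ'` relation). -/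
inductive CXLTrace (owner : Loc → Machine) (vol : Machine → Bool) (z : Val) :
    CXLConfig Machine Loc Val → List (CXLLabel Machine Loc Val) →
      CXLConfig Machine Loc Val → Prop where
  | nil (γ : CXLConfig Machine Loc Val) : CXLTrace owner vol z γ [] γ
  | tau {γ γ' γ'' : CXLConfig Machine Loc Val} {ls : List (CXLLabel Machine Loc Val)}
      (h : CXLStep owner vol z γ .tau γ') (ht : CXLTrace owner vol z γ' ls γ'') :
      CXLTrace owner vol z γ ls γ''
  | cons {γ γ' γ'' : CXLConfig Machine Loc Val} {l : CXLLabel Machine Loc Val}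
      {ls : List (CXLLabel Machine Loc Val)}
      (h : CXLStep owner vol z γ l γ') (ht : CXLTrace owner vol z γ' ls γ'') :
      CXLTrace owner vol z γ (l :: ls) γ''

/-- Reachability by a (possibly empty) finite sequence of silent `τ`-steps. -/
def CXLTauSteps (owner : Loc → Machine) (vol : Machine → Bool) (z : Val) :
    CXLConfig Machine Loc Val → CXLConfig Machine Loc Val → Prop :=
  Relation.ReflTransGen (fun a b => CXLStep owner vol z a .tau b)

/-- The initial configuration `γ_0`: all caches empty, all memories `0`. -/
def CXLInit (Machine Loc : Type) (z : Val) : CXLConfig Machine Loc Val :=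
  ⟨fun _ _ => none, fun _ _ => z⟩

/-- The invariant after the `MStore`: all caches empty at `x`, and
machine `m2`'s memory holds `one` at `x`. -/
def PInv (m2 : Machine) (x : Loc) (one : Val)
    (γ : CXLConfig Machine Loc Val) : Prop :=
  (∀ j, γ.cache j x = none) ∧ γ.mem m2 x = one

lemma tau_pres {owner : Loc → Machine} {vol : Machine → Bool} {z : Val}
    {m2 : Machine} {x : Loc} {one : Val} {γ γ' : CXLConfig Machine Loc Val}
    (h : CXLStep owner vol z γ .tau γ') (hP : PInv m2 x one γ) :
    PInv m2 x one γ' := by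
  obtain ⟨hc, hm⟩ := hP
  cases h with
  | prop_cache_cache i x' v hik hcv =>
      have hxx : x ≠ x' := by rintro rfl; simp [hc i] at hcv
      exact ⟨fun j => by simp [if_neg hxx, hc j], hm⟩
  | prop_cache_mem x' v hcv =>
      have hxx : x ≠ x' := by rintro rfl; simp [hc] at hcv
      exact ⟨fun j => by simp [if_neg hxx, hc j], by simp [hxx, hm]⟩

lemma no_bad_trace {owner : Loc → Machine} {vol : Machine → Bool} {z : Val}
    {m1 m2 : Machine} (h12 : m1 ≠ m2)
    {x y : Loc} (hx : owner x = m2) (hy : owner y = m1)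
    (hnv2 : vol m2 = false) {one : Val} (hone : one ≠ z) :
    ∀ {γ γ' : CXLConfig Machine Loc Val} {ls : List (CXLLabel Machine Loc Val)},
      CXLTrace owner vol z γ ls γ' →
      (ls = [.MStore m1 x one, .RStore m2 y one, .Crash m2,
              .Load m1 y one, .Load m1 x z] ∨
        (PInv m2 x one γ ∧
          (ls = [.RStore m2 y one, .Crash m2, .Load m1 y one, .Load m1 x z] ∨
           ls = [.Crash m2, .Load m1 y one, .Load m1 x z] ∨
           ls = [.Load m1 y one, .Load m1 x z] ∨
           ls = [.Load m1 x z]))) → False := by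
  have hxy : x ≠ y := by
    rintro rfl; exact h12 (hy ▸ hx)
  intro γ γ' ls ht
  induction ht with
  | nil γ => rintro (h | ⟨_, h | h | h | h⟩) <;> simp at h
  | tau h ht ih =>
      rintro (h5 | ⟨hP, hrest⟩)
      · exact ih (Or.inl h5)
      · exact ih (Or.inr ⟨tau_pres h hP, hrest⟩)
  | cons h ht ih =>
      rintro (h5 | ⟨hP, h4 | h3 | h2 | h1⟩)
      · simp only [List.cons.injEq] at h5
        obtain ⟨rfl, rfl⟩ := h5
        cases h with
        | mstore i x v =>
            refine ih (Or.inr ⟨⟨fun j => by simp, ?_⟩, Or.inl rfl⟩)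
            simp [hx]
      · simp only [List.cons.injEq] at h4
        obtain ⟨rfl, rfl⟩ := h4
        cases h with
        | rstore i x v =>
            exact ih (Or.inr ⟨⟨fun j => by simp [hxy, hP.1 j], hP.2⟩,
              Or.inr (Or.inl rfl)⟩)
      · simp only [List.cons.injEq] at h3
        obtain ⟨rfl, rfl⟩ := h3
        cases h with
        | crash i =>
            refine ih (Or.inr ⟨⟨fun j => ?_, ?_⟩, Or.inr (Or.inr (Or.inl rfl))⟩)
            · simp [hP.1 j]
            · simp [hnv2, hP.2]
      · simp only [List.cons.injEq] at h2
        obtain ⟨rfl, rfl⟩ := h2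
        cases h with
        | load_cache i j x v hj =>
            exact ih (Or.inr ⟨⟨fun j' => by simp [hxy, hP.1 j'], hP.2⟩,
              Or.inr (Or.inr (Or.inr rfl))⟩)
        | load_mem i x v hj hm =>
            exact ih (Or.inr ⟨hP, Or.inr (Or.inr (Or.inr rfl))⟩)
      · simp only [List.cons.injEq] at h1
        obtain ⟨rfl, rfl⟩ := h1
        cases h with
        | load_cache i j x v hj => simp [hP.1 j] at hj
        | load_mem i x v hj hm =>
            rw [hx, hP.2] at hm
            exact hone hm

/-- Litmus test 9: using `MStore` for the first write prevents the
inconsistent recovered state. -/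
theorem litmus_mstore_prevents_inconsistency
    (owner : Loc → Machine) (vol : Machine → Bool) (z : Val)
    (m1 m2 : Machine) (h12 : m1 ≠ m2)
    (x y : Loc) (hx : owner x = m2) (hy : owner y = m1)
    (hnv2 : vol m2 = false) (one : Val) (hone : one ≠ z) :
    ¬ ∃ γ' : CXLConfig Machine Loc Val,
      CXLTrace owner vol z (CXLInit Machine Loc z)
        [.MStore m1 x one, .RStore m2 y one, .Crash m2,
         .Load m1 y one, .Load m1 x z] γ' := by
  rintro ⟨γ', ht⟩
  exact no_bad_trace h12 hx hy hnv2 hone ht (Or.inl rfl)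
end

section
/- (Key claim in the proof of Proposition 1(8)) For any machine i, any location x, any value v, and any configurations γ_1, γ_2, γ_3, γ_4: if γ_1 →^{LStore_i(x,v)} γ_2, γ_3 is reachable from γ_2 by a (possibly empty) finite sequence consisting solely of silent τ-steps (internal propagation steps), and γ_3 →^{RFlush_i(x)} γ_4, then γ_1 ⇒^{MStore_i(x,v)} γ_4, i.e., γ_4 is reachable from γ_1 by a transition sequence consisting of MStore_i(x,v) possibly interleaved with silent τ-steps. -/
variable {Machine Loc Val : Type} [DecidableEq Machine] [DecidableEq Loc]

/-!
Write `γ[x := v]` (`memStore`) for the effect of `MStore(x,v)` on `γ`: evict `x` from every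
cache and write `v` to its home memory. This map sends the configuration after
`LStore_i(x,v)` to the configuration after `MStore_i(x,v)`, and it carries every `τ`-step
to zero or one `τ`-step (a step at `x` is absorbed, a step elsewhere commutes with it).
Along the `τ`-steps, every cached copy of `x` holds `v`, and so does memory once no copy
is left. Hence when `RFlush_i(x)` fires, `x` is uncached with `v` in memory, so
`γ₃[x := v] = γ₃`.
-/

namespace CXLConfig

def memStore (owner : Loc → Machine) (x : Loc) (v : Val)
    (γ : CXLConfig Machine Loc Val) : CXLConfig Machine Loc Val :=
  ⟨fun j y => if y = x then none else γ.cache j y,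
   fun j y => if j = owner x ∧ y = x then v else γ.mem j y⟩

/-- Every `Load` of `x` returns `v`. -/
def Holds (owner : Loc → Machine) (x : Loc) (v : Val) (γ : CXLConfig Machine Loc Val) :
    Prop :=
  (∀ j w, γ.cache j x = some w → w = v) ∧
  ((∀ j, γ.cache j x = none) → γ.mem (owner x) x = v)

theorem memStore_eq_self {owner : Loc → Machine} {x : Loc} {v : Val}
    {γ : CXLConfig Machine Loc Val} (hc : ∀ j, γ.cache j x = none)
    (hm : γ.mem (owner x) x = v) : γ.memStore owner x v = γ := by
  cases γ
  simp only [memStore, mk.injEq]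
  constructor <;> funext j y <;> split_ifs <;> simp_all

end CXLConfig

open CXLConfig

section Simulation

variable {owner : Loc → Machine} {vol : Machine → Bool} {z : Val} {x : Loc} {v : Val}

theorem CXLStep.memStore_of_lstore {i : Machine} {γ γ' : CXLConfig Machine Loc Val}
    (h : CXLStep owner vol z γ (.LStore i x v) γ') :
    γ'.memStore owner x v = γ.memStore owner x v := by
  cases h
  simp only [memStore, mk.injEq, and_true]
  funext j y
  split_ifs <;> rfl

theorem CXLStep.holds_of_lstore {i : Machine} {γ γ' : CXLConfig Machine Loc Val}
    (h : CXLStep owner vol z γ (.LStore i x v) γ') : γ'.Holds owner x v := by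
  cases h
  refine ⟨fun j w hw => ?_, fun hc => ?_⟩
  · by_cases hj : j = i <;> simp_all
  · simpa using hc i

theorem CXLStep.holds_of_tau {γ γ' : CXLConfig Machine Loc Val}
    (h : CXLStep owner vol z γ .tau γ') (hγ : γ.Holds owner x v) :
    γ'.Holds owner x v := by
  obtain ⟨hval, hmem⟩ := hγ
  cases h with
  | prop_cache_cache m y w hik hw =>
    by_cases hyx : y = x
    · subst hyx
      refine ⟨fun j w' hw' => ?_, fun hc => by simpa using hc (owner y)⟩
      simp only [if_true] at hw'
      split_ifs at hw'
      · exact Option.some.inj hw' ▸ hval m w hw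
      · exact hval j w' hw'
    · have hxy : x ≠ y := Ne.symm hyx
      exact ⟨by simpa [hxy] using hval, by simpa [hxy] using hmem⟩
  | prop_cache_mem y w hw =>
    by_cases hyx : y = x
    · subst hyx
      exact ⟨by simp, fun _ => by simpa using hval _ w hw⟩
    · have hxy : x ≠ y := Ne.symm hyx
      exact ⟨by simpa [hxy] using hval, by simpa [hxy] using hmem⟩

theorem CXLStep.tauSteps_memStore_of_tau {γ γ' : CXLConfig Machine Loc Val}
    (h : CXLStep owner vol z γ .tau γ') :
    CXLTauSteps owner vol z (γ.memStore owner x v) (γ'.memStore owner x v) := by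
  cases h with
  | prop_cache_cache m y w hik hw =>
    by_cases hyx : y = x
    · subst hyx
      refine (congrArg (CXLTauSteps owner vol z _) ?_).mp .refl
      simp only [memStore, mk.injEq, and_true]
      funext j y'
      split_ifs <;> rfl
    · have hw' : (γ.memStore owner x v).cache m y = some w := by simpa [memStore, hyx] using hw
      refine .single ((congrArg (CXLStep owner vol z _ .tau) ?_).mp
        (CXLStep.prop_cache_cache _ m y w hik hw'))
      simp only [memStore, mk.injEq, and_true]
      funext j y'
      split_ifs <;> simp_all
  | prop_cache_mem y w hw =>
    by_cases hyx : y = x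
    · subst hyx
      refine (congrArg (CXLTauSteps owner vol z _) ?_).mp .refl
      simp only [memStore, mk.injEq]
      constructor <;> funext j y' <;> split_ifs <;> simp_all
    · have hw' : (γ.memStore owner x v).cache (owner y) y = some w := by
        simpa [memStore, hyx] using hw
      refine .single ((congrArg (CXLStep owner vol z _ .tau) ?_).mp
        (CXLStep.prop_cache_mem _ y w hw'))
      simp only [memStore, mk.injEq]
      constructor <;> funext j y' <;> split_ifs <;> simp_all

theorem CXLTauSteps.holds {γ γ' : CXLConfig Machine Loc Val}
    (h : CXLTauSteps owner vol z γ γ') (hγ : γ.Holds owner x v) : γ'.Holds owner x v := by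
  induction h with
  | refl => exact hγ
  | tail _ hstep ih => exact hstep.holds_of_tau ih

theorem CXLTauSteps.memStore {γ γ' : CXLConfig Machine Loc Val}
    (h : CXLTauSteps owner vol z γ γ') :
    CXLTauSteps owner vol z (γ.memStore owner x v) (γ'.memStore owner x v) :=
  Relation.ReflTransGen.lift' _ (fun _ _ hstep => hstep.tauSteps_memStore_of_tau) _ _ h

theorem CXLTauSteps.trace_nil {γ γ' : CXLConfig Machine Loc Val}
    (h : CXLTauSteps owner vol z γ γ') : CXLTrace owner vol z γ [] γ' := by
  induction h using Relation.ReflTransGen.head_induction_on with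
  | refl => exact .nil _
  | head hstep _ ih => exact .tau hstep ih

end Simulation

/-- Key claim in the proof of Proposition 1(8): an `LStore`, followed by
internal propagation steps and an `RFlush`, is simulated by an `MStore`
(up to `τ`-steps). -/
theorem lstore_taus_rflush_simulated_by_mstore
    (owner : Loc → Machine) (vol : Machine → Bool) (z : Val)
    (i : Machine) (x : Loc) (v : Val)
    (γ₁ γ₂ γ₃ γ₄ : CXLConfig Machine Loc Val)
    (h1 : CXLStep owner vol z γ₁ (.LStore i x v) γ₂)
    (h2 : CXLTauSteps owner vol z γ₂ γ₃)
    (h3 : CXLStep owner vol z γ₃ (.RFlush i x) γ₄) :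
    CXLTrace owner vol z γ₁ [.MStore i x v] γ₄ := by
  cases h3 with | rflush _ _ huncached => ?_
  have hmstore : CXLStep owner vol z γ₁ (.MStore i x v) (γ₁.memStore owner x v) :=
    CXLStep.mstore γ₁ i x v
  have hsim : CXLTauSteps owner vol z (γ₁.memStore owner x v) (γ₃.memStore owner x v) :=
    h1.memStore_of_lstore ▸ h2.memStore
  have hmem : γ₃.mem (owner x) x = v := (h2.holds h1.holds_of_lstore).2 huncached
  rw [memStore_eq_self huncached hmem] at hsim
  exact .cons hmstore hsim.trace_nil
end
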